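/- Let m⁺, m⁻ ∈ ℝ³ with m⁺ ≠ m⁻, m₃^± = (1/2)|m⊥^±|², and let ν = (m⁺ − m⁻)/|m⁺ − m⁻|. Let {ξ, η} be an orthonormal basis of ℝ². Then |(Σ_{ξη}(m⁺) − Σ_{ξη}(m⁻)) · ν| = |(m_ξ⁺ − m_ξ⁻)⁴ − (m_η⁺ − m_η⁻)⁴| / (12|m⁺ − m⁻|). -/
import Mathlib


noncomputable section

/-- Euclidean norm on ℝ³ (as ℝ × ℝ × ℝ). -/
def norm3 (m : ℝ × ℝ × ℝ) : ℝ := Real.sqrt (m.1^2 + m.2.1^2 + m.2.2^2)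

/-- Euclidean inner product on ℝ³. -/
def dot3 (a b : ℝ × ℝ × ℝ) : ℝ := a.1 * b.1 + a.2.1 * b.2.1 + a.2.2 * b.2.2

def SigmaRot (ξ η : ℝ × ℝ) (m : ℝ × ℝ × ℝ) : ℝ × ℝ × ℝ :=
  let mξ := m.1 * ξ.1 + m.2.1 * ξ.2
  let mη := m.1 * η.1 + m.2.1 * η.2
  let A := m.2.2 * mξ - mξ * mη^2 / 2 - mξ^3 / 6
  let B := -(m.2.2 * mη) + mη * mξ^2 / 2 + mη^3 / 6
  (A * ξ.1 + B * η.1, A * ξ.2 + B * η.2, -(mξ^2) / 2 + mη^2 / 2)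

/-- Helper: pulling out the scalar and the norm. -/
lemma jump_aux (a b : ℝ × ℝ × ℝ) (N : ℝ) (hN : 0 < N) (K : ℝ)
    (h : dot3 a b = K / 12) : |dot3 a (N⁻¹ • b)| = |K| / (12 * N) := by
  have hd : dot3 a (N⁻¹ • b) = N⁻¹ * dot3 a b := by
    obtain ⟨a1, a2, a3⟩ := a
    obtain ⟨b1, b2, b3⟩ := b
    simp only [dot3, Prod.smul_mk, smul_eq_mul]
    ring
  rw [hd, h, abs_mul, abs_inv, abs_of_pos hN, abs_div,
    abs_of_pos (show (0:ℝ) < 12 by norm_num), inv_mul_eq_div, div_div]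

set_option maxHeartbeats 1600000 in
/-- Jump cost: |(Σ_{ξη}(m⁺) − Σ_{ξη}(m⁻))·ν| = |(m_ξ⁺ − m_ξ⁻)⁴ − (m_η⁺ − m_η⁻)⁴|/(12|m⁺ − m⁻|). -/
theorem jump_cost (mp mm : ℝ × ℝ × ℝ) (hne : mp ≠ mm)
    (hp : mp.2.2 = (1/2) * (mp.1^2 + mp.2.1^2))
    (hm : mm.2.2 = (1/2) * (mm.1^2 + mm.2.1^2))
    (ξ η : ℝ × ℝ)
    (hξ : ξ.1^2 + ξ.2^2 = 1) (hη : η.1^2 + η.2^2 = 1) (hξη : ξ.1 * η.1 + ξ.2 * η.2 = 0) :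
    |dot3 (SigmaRot ξ η mp - SigmaRot ξ η mm) ((norm3 (mp - mm))⁻¹ • (mp - mm))| =
      |((mp.1 * ξ.1 + mp.2.1 * ξ.2) - (mm.1 * ξ.1 + mm.2.1 * ξ.2))^4 -
          ((mp.1 * η.1 + mp.2.1 * η.2) - (mm.1 * η.1 + mm.2.1 * η.2))^4| /
        (12 * norm3 (mp - mm)) := by
  obtain ⟨p1, p2, p3⟩ := mp
  obtain ⟨q1, q2, q3⟩ := mm
  obtain ⟨x1, x2⟩ := ξ
  obtain ⟨y1, y2⟩ := η
  dsimp only at hp hm hξ hη hξη ⊢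
  subst hp hm
  have hd : ¬(p1 = q1 ∧ p2 = q2) := by
    rintro ⟨h1, h2⟩
    exact hne (by rw [h1, h2])
  have hs : 0 < (p1 - q1)^2 + (p2 - q2)^2 +
      (1/2 * (p1^2 + p2^2) - 1/2 * (q1^2 + q2^2))^2 := by
    rcases not_and_or.mp hd with h | h
    · have h1 : 0 < (p1 - q1)^2 := pow_two_pos_of_ne_zero (sub_ne_zero.mpr h)
      nlinarith [sq_nonneg (p2 - q2), sq_nonneg (1/2 * (p1^2 + p2^2) - 1/2 * (q1^2 + q2^2))]
    · have h1 : 0 < (p2 - q2)^2 := pow_two_pos_of_ne_zero (sub_ne_zero.mpr h)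
      nlinarith [sq_nonneg (p1 - q1), sq_nonneg (1/2 * (p1^2 + p2^2) - 1/2 * (q1^2 + q2^2))]
  have hN : 0 < norm3 ((p1, p2, 1/2 * (p1^2 + p2^2)) - (q1, q2, 1/2 * (q1^2 + q2^2))) := by
    simp only [norm3, Prod.mk_sub_mk]
    exact Real.sqrt_pos.mpr hs
  refine jump_aux _ _ _ hN _ ?_
  have e2 : (x1 * y2 - x2 * y1 - 1) * (x1 * y2 - x2 * y1 + 1) = 0 := by
    linear_combination (y1^2 + y2^2) * hξ + hη - (x1 * y1 + x2 * y2) * hξη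
  rcases mul_eq_zero.mp e2 with h | h
  · have hy1 : y1 = -x2 := by linear_combination (-y1) * hξ + x1 * hξη + (-x2) * h
    have hy2 : y2 = x1 := by linear_combination (-y2) * hξ + x2 * hξη + x1 * h
    rw [hy1, hy2]
    simp only [SigmaRot, dot3, Prod.mk_sub_mk]
    linear_combination ((-1/4:ℝ)*x2^2*q2^4 + (1/4:ℝ)*x2^2*q1^4 + (1/2:ℝ)*x2^2*p2*q2^3 + (1/2:ℝ)*x2^2*p2*q1^2*q2 + (-1/2:ℝ)*x2^2*p2^2*q2^2 + (1/2:ℝ)*x2^2*p2^3*q2 + (-1/4:ℝ)*x2^2*p2^4 + (-1/2:ℝ)*x2^2*p1*q1*q2^2 + (-1/2:ℝ)*x2^2*p1*q1^3 + (-1/2:ℝ)*x2^2*p1*p2^2*q1 + (1/2:ℝ)*x2^2*p1^2*q1^2 + (1/2:ℝ)*x2^2*p1^2*p2*q2 + (-1/2:ℝ)*x2^2*p1^3*q1 + (1/4:ℝ)*x2^2*p1^4 + (-1:ℝ)*x1*x2*q1*q2^3 + (-1:ℝ)*x1*x2*q1^3*q2 + (1:ℝ)*x1*x2*p2*q1*q2^2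 + (1:ℝ)*x1*x2*p2*q1^3 + (-1:ℝ)*x1*x2*p2^2*q1*q2 + (1:ℝ)*x1*x2*p2^3*q1 + (1:ℝ)*x1*x2*p1*q2^3 + (1:ℝ)*x1*x2*p1*q1^2*q2 + (-1:ℝ)*x1*x2*p1*p2*q2^2 + (-1:ℝ)*x1*x2*p1*p2*q1^2 + (1:ℝ)*x1*x2*p1*p2^2*q2 + (-1:ℝ)*x1*x2*p1*p2^3 + (-1:ℝ)*x1*x2*p1^2*q1*q2 + (1:ℝ)*x1*x2*p1^2*p2*q1 + (1:ℝ)*x1*x2*p1^3*q2 + (-1:ℝ)*x1*x2*p1^3*p2 + (1/4:ℝ)*x1^2*q2^4 + (-1/4:ℝ)*x1^2*q1^4 + (-1/2:ℝ)*x1^2*p2*q2^3 + (-1/2:ℝ)*x1^2*p2*q1^2*q2 + (1/2:ℝ)*x1^2*p2^2*q2^2 + (-1/2:ℝ)*x1^2*p2^3*q2 + (1/4:ℝ)*x1^2*p2^4 + (1/2:ℝ)*x1^2*p1*q1*q2^2 + (1/2:ℝ)*x1^2*p1*q1^3 + (1/2:ℝ)*x1^2*p1*p2^2*q1 + (-1/2:ℝ)*x1^2*p1^2*q1^2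 + (-1/2:ℝ)*x1^2*p1^2*p2*q2 + (1/2:ℝ)*x1^2*p1^3*q1 + (-1/4:ℝ)*x1^2*p1^4) * hξ
  · have hy1 : y1 = x2 := by linear_combination (-y1) * hξ + x1 * hξη + (-x2) * h
    have hy2 : y2 = -x1 := by linear_combination (-y2) * hξ + x2 * hξη + x1 * h
    rw [hy1, hy2]
    simp only [SigmaRot, dot3, Prod.mk_sub_mk]
    linear_combination ((-1/4:ℝ)*x2^2*q2^4 + (1/4:ℝ)*x2^2*q1^4 + (1/2:ℝ)*x2^2*p2*q2^3 + (1/2:ℝ)*x2^2*p2*q1^2*q2 + (-1/2:ℝ)*x2^2*p2^2*q2^2 + (1/2:ℝ)*x2^2*p2^3*q2 + (-1/4:ℝ)*x2^2*p2^4 + (-1/2:ℝ)*x2^2*p1*q1*q2^2 + (-1/2:ℝ)*x2^2*p1*q1^3 + (-1/2:ℝ)*x2^2*p1*p2^2*q1 + (1/2:ℝ)*x2^2*p1^2*q1^2 + (1/2:ℝ)*x2^2*p1^2*p2*q2 + (-1/2:ℝ)*x2^2*p1^3*q1 + (1/4:ℝ)*x2^2*p1^4 + (-1:ℝ)*x1*x2*q1*q2^3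 + (-1:ℝ)*x1*x2*q1^3*q2 + (1:ℝ)*x1*x2*p2*q1*q2^2 + (1:ℝ)*x1*x2*p2*q1^3 + (-1:ℝ)*x1*x2*p2^2*q1*q2 + (1:ℝ)*x1*x2*p2^3*q1 + (1:ℝ)*x1*x2*p1*q2^3 + (1:ℝ)*x1*x2*p1*q1^2*q2 + (-1:ℝ)*x1*x2*p1*p2*q2^2 + (-1:ℝ)*x1*x2*p1*p2*q1^2 + (1:ℝ)*x1*x2*p1*p2^2*q2 + (-1:ℝ)*x1*x2*p1*p2^3 + (-1:ℝ)*x1*x2*p1^2*q1*q2 + (1:ℝ)*x1*x2*p1^2*p2*q1 + (1:ℝ)*x1*x2*p1^3*q2 + (-1:ℝ)*x1*x2*p1^3*p2 + (1/4:ℝ)*x1^2*q2^4 + (-1/4:ℝ)*x1^2*q1^4 + (-1/2:ℝ)*x1^2*p2*q2^3 + (-1/2:ℝ)*x1^2*p2*q1^2*q2 + (1/2:ℝ)*x1^2*p2^2*q2^2 + (-1/2:ℝ)*x1^2*p2^3*q2 + (1/4:ℝ)*x1^2*p2^4 + (1/2:ℝ)*x1^2*p1*q1*q2^2 + (1/2:ℝ)*x1^2*p1*q1^3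 + (1/2:ℝ)*x1^2*p1*p2^2*q1 + (-1/2:ℝ)*x1^2*p1^2*q1^2 + (-1/2:ℝ)*x1^2*p1^2*p2*q2 + (1/2:ℝ)*x1^2*p1^3*q1 + (-1/4:ℝ)*x1^2*p1^4) * hξ
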